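/- arXiv:2410.19002 — 2 statements merged into one kernel-verified Lean document; each statement's English description precedes it below -/
import Mathlib

section
/- Let N be a finite nonempty player set and for each nonempty S ⊆ N let μ_S ∈ ℝ and σ_S > 0. Define the mean game μ (value μ_S on each nonempty S, 0 on ∅) and the deviation game σ̂ (value σ_S/σ_N on each nonempty S, 0 on ∅). Then the following are equivalent: (1) there exist d, r : N → ℝ with r_i ≥ 0 for all i, d(N) = μ_N, r(N) = 1, such that for every nonempty S ⊆ N the pushforward of the Gaussian measure N(μ_N, σ_N²) under the map z ↦ d(S) + r(S)·(z − μ_N) second-order stochastically dominates N(μ_S, σ_S²); (2) the core C(μ) is nonempty and the nonnegative cost core C_cost(σ̂) is nonempty. -/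
/-!
For Gaussians, `∫_{(-∞, u]} F_{N(m, s²)} = s ψ((u - m) / s)`, where `ψ = φ + x Φ` is the
antiderivative of the standard normal CDF `Φ`. Hence `N(m₁, s₁²) ⪰_SSD N(m₂, s₂²)` iff
`m₂ ≤ m₁` and `s₁ ≤ s₂`. Sufficiency: `ψ` is increasing and `t ↦ t ψ(c / t)` has derivative
`φ(c / t) ≥ 0`. Necessity: as `u → ∞`, `s ψ((u - m) / s) = u - m + o(1)` forces `m₂ ≤ m₁`;
as `u → -∞` the integrated CDF decays like the density, and the Gaussian tail with the larger
variance is eventually the heavier one, which forces `s₁ ≤ s₂`.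

The affine image of `N(μ_N, σ_N²)` in condition (1) is `N(d(S), (r(S) σ_N)²)`, so (1) says
exactly `μ_S ≤ d(S)` and `r(S) ≤ σ_S / σ_N` for every coalition: `d` lies in the core of the
mean game and `r` in the nonnegative cost core of the deviation game.
-/

open MeasureTheory ProbabilityTheory
open scoped NNReal ENNReal

/-- `P` second-order stochastically dominates `Q`. -/
def SSD (P Q : Measure ℝ) : Prop :=
  ∀ u : ℝ, (∫ z in Set.Iic u, (cdf P z - cdf Q z)) ≤ 0

/-- The core of a TU-game `v` on the finite player set `N`. -/
def core {N : Type*} [Fintype N] (v : Finset N → ℝ) : Set (N → ℝ) :=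
  {x | (∀ S : Finset N, v S ≤ ∑ i ∈ S, x i) ∧ ∑ i : N, x i = v Finset.univ}

/-- The nonnegative cost core of a TU-game `v` on the finite player set `N`. -/
def costCore {N : Type*} [Fintype N] (v : Finset N → ℝ) : Set (N → ℝ) :=
  {x | (∀ i, 0 ≤ x i) ∧ (∀ S : Finset N, ∑ i ∈ S, x i ≤ v S) ∧ ∑ i : N, x i = v Finset.univ}

open Real Filter Set Topology

lemma integrableOn_Iic_deriv_of_nonneg' {g g' : ℝ → ℝ} {a l : ℝ}
    (hderiv : ∀ x ∈ Iic a, HasDerivAt g (g' x) x) (g'pos : ∀ x ∈ Iio a, 0 ≤ g' x)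
    (hg : Tendsto g atBot (𝓝 l)) : IntegrableOn g' (Iic a) := by
  have h : IntegrableOn (fun x => g' (-x)) (Ioi (-a)) := by
    refine integrableOn_Ioi_deriv_of_nonneg' (g := fun x => -g (-x)) (l := -l)
      (fun x hx => ?_) (fun x hx => g'pos (-x) (mem_Iio.mpr (neg_lt.mp hx))) ?_
    · exact ((hderiv (-x) (mem_Iic.mpr (neg_le.mp hx))).comp x (hasDerivAt_neg x)).neg.congr_deriv
        (by simp)
    · exact (hg.comp tendsto_neg_atTop_atBot).neg
  simpa using (Iff.mpr integrableOn_Ici_iff_integrableOn_Ioi h).comp_neg_Iic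

lemma mul_sub_le_sub_of_hasDerivAt_of_monotoneOn {f g : ℝ → ℝ} {a b : ℝ} (hab : a ≤ b)
    (hf : ∀ x ∈ Icc a b, HasDerivAt f (g x) x) (hg : MonotoneOn g (Icc a b)) :
    g a * (b - a) ≤ f b - f a := by
  refine (convex_Icc a b).mul_sub_le_image_sub_of_le_deriv
    (fun x hx => (hf x hx).continuousAt.continuousWithinAt)
    (fun x hx => (hf x (interior_subset hx)).differentiableAt.differentiableWithinAt)
    (fun x hx => ?_) a (left_mem_Icc.mpr hab) b (right_mem_Icc.mpr hab) hab
  rw [interior_Icc] at hx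
  rw [(hf x (Ioo_subset_Icc_self hx)).deriv]
  exact hg (left_mem_Icc.mpr hab) (Ioo_subset_Icc_self hx) hx.1.le

lemma tendsto_sub_div_atTop (m : ℝ) {s : ℝ} (hs : 0 < s) :
    Tendsto (fun u => (u - m) / s) atTop atTop :=
  (tendsto_atTop_add_const_right _ (-m) tendsto_id).atTop_div_const hs

lemma tendsto_sub_div_atBot (m : ℝ) {s : ℝ} (hs : 0 < s) :
    Tendsto (fun u => (u - m) / s) atBot atBot :=
  (tendsto_atBot_add_const_right _ (-m) tendsto_id).atBot_div_const hs

noncomputable def stdNormalPDF (x : ℝ) : ℝ := gaussianPDFReal 0 1 x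

noncomputable def stdNormalCDF (x : ℝ) : ℝ := ∫ t in Iic x, stdNormalPDF t

/-- The antiderivative of `stdNormalCDF` vanishing at `-∞` (`integral_cdf_gaussianReal`);
probabilistically `x ↦ 𝔼[(x - Z)⁺]` for a standard normal `Z`. -/
noncomputable def stdNormalIntCDF (x : ℝ) : ℝ := stdNormalPDF x + x * stdNormalCDF x

local notation "φ" => stdNormalPDF
local notation "Φ" => stdNormalCDF
local notation "ψ" => stdNormalIntCDF

lemma stdNormalPDF_def : φ = fun x => (√(2 * π))⁻¹ * exp (-x ^ 2 / 2) := by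
  funext x
  simp [stdNormalPDF, gaussianPDFReal]

lemma stdNormalPDF_eq (x : ℝ) : φ x = (√(2 * π))⁻¹ * exp (-x ^ 2 / 2) :=
  congrFun stdNormalPDF_def x

lemma stdNormalPDF_pos (x : ℝ) : 0 < φ x := gaussianPDFReal_pos 0 1 x one_ne_zero

lemma integrable_stdNormalPDF : Integrable φ := integrable_gaussianPDFReal 0 1

lemma integral_stdNormalPDF : ∫ x, φ x = 1 := integral_gaussianPDFReal_eq_one 0 one_ne_zero

lemma stdNormalPDF_neg (x : ℝ) : φ (-x) = φ x := by
  simp only [stdNormalPDF_eq, neg_sq]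

lemma hasDerivAt_stdNormalPDF (x : ℝ) : HasDerivAt φ (-x * φ x) x := by
  have hin : HasDerivAt (fun y : ℝ => -y ^ 2 / 2) (-x) x :=
    ((hasDerivAt_pow 2 x).neg.div_const 2).congr_deriv (by ring)
  rw [stdNormalPDF_eq, stdNormalPDF_def]
  exact (hin.exp.const_mul _).congr_deriv (by ring)

lemma tendsto_stdNormalPDF_atTop : Tendsto φ atTop (𝓝 0) := by
  have h : Tendsto (fun x : ℝ => -x ^ 2 / 2) atTop atBot :=
    (tendsto_neg_atTop_atBot.comp (tendsto_pow_atTop two_ne_zero)).atBot_div_const two_pos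
  rw [stdNormalPDF_def]
  simpa using (tendsto_exp_atBot.comp h).const_mul (√(2 * π))⁻¹

lemma tendsto_stdNormalPDF_atBot : Tendsto φ atBot (𝓝 0) := by
  simpa [Function.comp_def, stdNormalPDF_neg] using
    tendsto_stdNormalPDF_atTop.comp tendsto_neg_atBot_atTop

lemma monotoneOn_stdNormalPDF : MonotoneOn φ (Iic 0) := by
  intro x hx y hy hxy
  simp only [stdNormalPDF_eq]
  refine mul_le_mul_of_nonneg_left (exp_le_exp.mpr ?_) (by positivity)
  nlinarith [mem_Iic.mp hy]

lemma stdNormalCDF_nonneg (x : ℝ) : 0 ≤ Φ x :=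
  setIntegral_nonneg measurableSet_Iic fun t _ => (stdNormalPDF_pos t).le

lemma stdNormalCDF_le_one (x : ℝ) : Φ x ≤ 1 := by
  rw [← integral_stdNormalPDF]
  exact setIntegral_le_integral integrable_stdNormalPDF
    (ae_of_all _ fun t => (stdNormalPDF_pos t).le)

lemma one_sub_stdNormalCDF (x : ℝ) : 1 - Φ x = ∫ t in Ioi x, φ t := by
  rw [← integral_stdNormalPDF, ← intervalIntegral.integral_Iic_add_Ioi (b := x)
    integrable_stdNormalPDF.integrableOn integrable_stdNormalPDF.integrableOn, stdNormalCDF]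
  ring

lemma stdNormalCDF_neg (x : ℝ) : Φ (-x) = 1 - Φ x := by
  rw [one_sub_stdNormalCDF, stdNormalCDF, ← integral_comp_neg_Ioi]
  simp only [stdNormalPDF_neg]

lemma hasDerivAt_stdNormalCDF (x : ℝ) : HasDerivAt Φ (φ x) x := by
  have h : Φ = fun y => Φ 0 + ∫ t in (0 : ℝ)..y, φ t := by
    funext y
    rw [← intervalIntegral.integral_Iic_sub_Iic integrable_stdNormalPDF.integrableOn
      integrable_stdNormalPDF.integrableOn, stdNormalCDF, stdNormalCDF]
    ring
  rw [h]
  exact (intervalIntegral.integral_hasDerivAt_right integrable_stdNormalPDF.intervalIntegrable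
    integrable_stdNormalPDF.aestronglyMeasurable.stronglyMeasurableAtFilter
    (hasDerivAt_stdNormalPDF x).continuousAt).const_add _

lemma monotone_stdNormalCDF : Monotone Φ :=
  monotone_of_hasDerivAt_nonneg hasDerivAt_stdNormalCDF fun x => (stdNormalPDF_pos x).le

/-- Mills' inequality. -/
lemma mul_one_sub_stdNormalCDF_le {x : ℝ} (hx : 0 ≤ x) : x * (1 - Φ x) ≤ φ x := by
  have hderiv : ∀ t ∈ Ici x, HasDerivAt (fun y => -φ y) (t * φ t) t :=
    fun t _ => (hasDerivAt_stdNormalPDF t).neg.congr_deriv (by ring)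
  have hpos : ∀ t ∈ Ioi x, 0 ≤ t * φ t :=
    fun t ht => mul_nonneg (hx.trans ht.out.le) (stdNormalPDF_pos t).le
  have hlim : Tendsto (fun y => -φ y) atTop (𝓝 (-0)) := tendsto_stdNormalPDF_atTop.neg
  calc x * (1 - Φ x) = ∫ t in Ioi x, x * φ t := by
        rw [one_sub_stdNormalCDF, integral_const_mul]
    _ ≤ ∫ t in Ioi x, t * φ t :=
        setIntegral_mono_on (integrable_stdNormalPDF.integrableOn.const_mul x)
          (integrableOn_Ioi_deriv_of_nonneg' hderiv hpos hlim) measurableSet_Ioi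
          fun t ht => mul_le_mul_of_nonneg_right ht.out.le (stdNormalPDF_pos t).le
    _ = φ x := by simpa using integral_Ioi_of_hasDerivAt_of_nonneg' hderiv hpos hlim

lemma hasDerivAt_stdNormalIntCDF (x : ℝ) : HasDerivAt ψ (Φ x) x := by
  have h := (hasDerivAt_stdNormalPDF x).add ((hasDerivAt_id x).mul (hasDerivAt_stdNormalCDF x))
  exact h.congr_deriv (by simp only [id_eq, one_mul]; ring)

lemma monotone_stdNormalIntCDF : Monotone ψ :=
  monotone_of_hasDerivAt_nonneg hasDerivAt_stdNormalIntCDF stdNormalCDF_nonneg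

lemma stdNormalIntCDF_neg (x : ℝ) : ψ (-x) = ψ x - x := by
  simp only [stdNormalIntCDF, stdNormalPDF_neg, stdNormalCDF_neg]
  ring

lemma stdNormalIntCDF_nonneg (x : ℝ) : 0 ≤ ψ x := by
  rcases le_total 0 x with hx | hx
  · exact add_nonneg (stdNormalPDF_pos x).le (mul_nonneg hx (stdNormalCDF_nonneg x))
  · have := mul_one_sub_stdNormalCDF_le (neg_nonneg.mpr hx)
    rw [← stdNormalCDF_neg, neg_neg, stdNormalPDF_neg] at this
    rw [stdNormalIntCDF]
    linarith

lemma le_stdNormalIntCDF (x : ℝ) : x ≤ ψ x := by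
  linarith [stdNormalIntCDF_neg x, stdNormalIntCDF_nonneg (-x)]

lemma le_mul_stdNormalIntCDF_div {s : ℝ} (hs : 0 < s) (c : ℝ) : c ≤ s * ψ (c / s) := by
  have := mul_le_mul_of_nonneg_left (le_stdNormalIntCDF (c / s)) hs.le
  rwa [mul_div_cancel₀ _ hs.ne'] at this

lemma stdNormalIntCDF_le_of_nonpos {x : ℝ} (hx : x ≤ 0) : ψ x ≤ φ x := by
  have := mul_nonpos_of_nonpos_of_nonneg hx (stdNormalCDF_nonneg x)
  rw [stdNormalIntCDF]
  linarith

lemma stdNormalIntCDF_le_of_nonneg {x : ℝ} (hx : 0 ≤ x) : ψ x ≤ x + φ x := by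
  have := mul_le_of_le_one_right hx (stdNormalCDF_le_one x)
  rw [stdNormalIntCDF]
  linarith

lemma tendsto_stdNormalIntCDF_atBot : Tendsto ψ atBot (𝓝 0) :=
  tendsto_of_tendsto_of_tendsto_of_le_of_le' tendsto_const_nhds tendsto_stdNormalPDF_atBot
    (Eventually.of_forall stdNormalIntCDF_nonneg)
    ((eventually_le_atBot 0).mono fun _ => stdNormalIntCDF_le_of_nonpos)

/-- `ψ x ≥ Φ (x - 1) ≥ φ (x - 2)`: compare each function with the slope of its antiderivative
over the preceding unit interval. -/
lemma stdNormalPDF_sub_two_le_stdNormalIntCDF {x : ℝ} (hx : x ≤ 1) : φ (x - 2) ≤ ψ x := by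
  have h1 := mul_sub_le_sub_of_hasDerivAt_of_monotoneOn (sub_le_self x zero_le_one)
    (fun t _ => hasDerivAt_stdNormalIntCDF t) (monotone_stdNormalCDF.monotoneOn _)
  have h2 := mul_sub_le_sub_of_hasDerivAt_of_monotoneOn (a := x - 2) (b := x - 1) (by linarith)
    (fun t _ => hasDerivAt_stdNormalCDF t)
    (monotoneOn_stdNormalPDF.mono fun t ht => mem_Iic.mpr (by linarith [ht.2]))
  have := stdNormalIntCDF_nonneg (x - 1)
  have := stdNormalCDF_nonneg (x - 2)
  norm_num at h1 h2
  linarith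

lemma monotoneOn_mul_stdNormalIntCDF_div (c : ℝ) :
    MonotoneOn (fun t => t * ψ (c / t)) (Ioi 0) := by
  have hderiv : ∀ t ∈ Ioi (0 : ℝ), HasDerivAt (fun t => t * ψ (c / t)) (φ (c / t)) t := by
    intro t ht
    have ht : t ≠ 0 := ht.out.ne'
    have hinner : HasDerivAt (fun t => c / t) (-(c / t ^ 2)) t := by
      simpa [div_eq_mul_inv] using (hasDerivAt_inv ht).const_mul c
    have h := (hasDerivAt_id t).mul ((hasDerivAt_stdNormalIntCDF (c / t)).comp t hinner)
    refine h.congr_deriv ?_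
    simp only [Function.comp_apply, id_eq, one_mul, stdNormalIntCDF]
    field_simp
    ring
  refine monotoneOn_of_hasDerivWithinAt_nonneg (convex_Ioi 0)
    (fun t ht => (hderiv t ht).continuousAt.continuousWithinAt)
    (fun t ht => (hderiv t (interior_subset ht)).hasDerivWithinAt)
    (fun t _ => (stdNormalPDF_pos _).le)

lemma gaussianReal_eq_map_zero_one (m s : ℝ) :
    gaussianReal m ⟨s ^ 2, sq_nonneg s⟩ = (gaussianReal 0 1).map (fun y => m + s * y) := by
  rw [show (fun y => m + s * y) = (m + ·) ∘ (s * ·) from rfl,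
    ← Measure.map_map (measurable_const_add _) (measurable_const_mul s),
    gaussianReal_map_const_mul, gaussianReal_map_const_add, mul_zero, zero_add, mul_one]
  rfl

lemma gaussianReal_map_affine (m t a c : ℝ) :
    (gaussianReal m ⟨t ^ 2, sq_nonneg t⟩).map (fun z => a + c * (z - m)) =
      gaussianReal a ⟨(c * t) ^ 2, sq_nonneg (c * t)⟩ := by
  rw [gaussianReal_eq_map_zero_one, Measure.map_map (by fun_prop) (by fun_prop),
    gaussianReal_eq_map_zero_one]
  congr 1
  funext y
  simp only [Function.comp_apply]
  ring

lemma cdf_gaussianReal_zero_one (x : ℝ) : cdf (gaussianReal 0 1) x = Φ x := by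
  rw [cdf_eq_real, measureReal_def, gaussianReal_apply_eq_integral 0 one_ne_zero,
    ENNReal.toReal_ofReal (setIntegral_nonneg measurableSet_Iic
      fun t _ => gaussianPDFReal_nonneg 0 1 t)]
  rfl

lemma cdf_gaussianReal {s : ℝ} (hs : 0 < s) (m z : ℝ) :
    cdf (gaussianReal m ⟨s ^ 2, sq_nonneg s⟩) z = Φ ((z - m) / s) := by
  have hpre : (fun y => m + s * y) ⁻¹' Iic z = Iic ((z - m) / s) := by
    ext t
    simp [le_div_iff₀ hs, mul_comm, le_sub_iff_add_le']
  -- `⟨s ^ 2, _⟩` has type `{r // 0 ≤ r}` rather than `ℝ≥0`, which instance search misses.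
  have : IsProbabilityMeasure (gaussianReal m ⟨s ^ 2, sq_nonneg s⟩) :=
    instIsProbabilityMeasureGaussianReal m _
  rw [← cdf_gaussianReal_zero_one, cdf_eq_real, cdf_eq_real, measureReal_def, measureReal_def,
    gaussianReal_eq_map_zero_one, Measure.map_apply (by fun_prop) measurableSet_Iic, hpre]

lemma cdf_dirac (m z : ℝ) : cdf (Measure.dirac m) z = (Ici m).indicator 1 z := by
  rw [cdf_eq_real, measureReal_def, Measure.dirac_apply' _ measurableSet_Iic]
  by_cases h : m ≤ z <;> simp [indicator, h]

lemma gaussianReal_zero_sq (m : ℝ) :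
    gaussianReal m ⟨0 ^ 2, sq_nonneg 0⟩ = Measure.dirac m := by
  rw [← gaussianReal_zero_var]
  congr 1
  exact NNReal.eq (zero_pow two_ne_zero)

lemma hasDerivAt_mul_stdNormalIntCDF_sub_div {s : ℝ} (hs : s ≠ 0) (m z : ℝ) :
    HasDerivAt (fun z => s * ψ ((z - m) / s)) (Φ ((z - m) / s)) z := by
  have h := ((hasDerivAt_stdNormalIntCDF ((z - m) / s)).comp z
    (((hasDerivAt_id z).sub_const m).div_const s)).const_mul s
  exact h.congr_deriv (by field_simp)

lemma tendsto_mul_stdNormalIntCDF_sub_div_atBot {s : ℝ} (hs : 0 < s) (m : ℝ) :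
    Tendsto (fun z => s * ψ ((z - m) / s)) atBot (𝓝 0) := by
  simpa using (tendsto_stdNormalIntCDF_atBot.comp (tendsto_sub_div_atBot m hs)).const_mul s

lemma integrableOn_cdf_gaussianReal {s : ℝ} (hs : 0 ≤ s) (m u : ℝ) :
    IntegrableOn (cdf (gaussianReal m ⟨s ^ 2, sq_nonneg s⟩)) (Iic u) := by
  obtain rfl | hs := hs.eq_or_lt
  · rw [gaussianReal_zero_sq, funext (cdf_dirac m), IntegrableOn,
      integrable_indicator_iff measurableSet_Ici, IntegrableOn,
      Measure.restrict_restrict measurableSet_Ici, Ici_inter_Iic]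
    exact integrableOn_const (by simp)
  · rw [funext (cdf_gaussianReal hs m)]
    exact integrableOn_Iic_deriv_of_nonneg'
      (fun z _ => hasDerivAt_mul_stdNormalIntCDF_sub_div hs.ne' m z)
      (fun z _ => stdNormalCDF_nonneg _) (tendsto_mul_stdNormalIntCDF_sub_div_atBot hs m)

lemma integral_cdf_gaussianReal {s : ℝ} (hs : 0 < s) (m u : ℝ) :
    ∫ z in Iic u, cdf (gaussianReal m ⟨s ^ 2, sq_nonneg s⟩) z = s * ψ ((u - m) / s) := by
  have hint := integrableOn_cdf_gaussianReal hs.le m u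
  rw [funext (cdf_gaussianReal hs m)] at hint ⊢
  rw [integral_Iic_of_hasDerivAt_of_tendsto'
    (fun z _ => hasDerivAt_mul_stdNormalIntCDF_sub_div hs.ne' m z) hint
    (tendsto_mul_stdNormalIntCDF_sub_div_atBot hs m), sub_zero]

lemma integral_cdf_gaussianReal_zero (m u : ℝ) :
    ∫ z in Iic u, cdf (gaussianReal m ⟨0 ^ 2, sq_nonneg 0⟩) z = max (u - m) 0 := by
  rw [gaussianReal_zero_sq, funext (cdf_dirac m), setIntegral_indicator measurableSet_Ici,
    Iic_inter_Ici]
  simp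

lemma sub_le_integral_cdf_gaussianReal {s : ℝ} (hs : 0 ≤ s) (m u : ℝ) :
    u - m ≤ ∫ z in Iic u, cdf (gaussianReal m ⟨s ^ 2, sq_nonneg s⟩) z := by
  obtain rfl | hs := hs.eq_or_lt
  · exact (integral_cdf_gaussianReal_zero m u).symm ▸ le_max_left _ _
  · exact (integral_cdf_gaussianReal hs m u).symm ▸ le_mul_stdNormalIntCDF_div hs _

lemma ssd_iff_forall_integral_cdf_le {P Q : Measure ℝ}
    (hP : ∀ u, IntegrableOn (cdf P) (Iic u)) (hQ : ∀ u, IntegrableOn (cdf Q) (Iic u)) :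
    SSD P Q ↔ ∀ u, ∫ z in Iic u, cdf P z ≤ ∫ z in Iic u, cdf Q z :=
  forall_congr' fun u => by rw [integral_sub (hP u) (hQ u), sub_nonpos]

section SSDGaussian

variable {m₁ m₂ s₁ s₂ : ℝ}

lemma gaussianReal_mean_le_of_forall_integral_cdf_le (hs₁ : 0 ≤ s₁) (hs₂ : 0 < s₂)
    (h : ∀ u, ∫ z in Iic u, cdf (gaussianReal m₁ ⟨s₁ ^ 2, sq_nonneg s₁⟩) z ≤
      ∫ z in Iic u, cdf (gaussianReal m₂ ⟨s₂ ^ 2, sq_nonneg s₂⟩) z) :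
    m₂ ≤ m₁ := by
  have hlim : Tendsto (fun u => m₁ + s₂ * φ ((u - m₂) / s₂)) atTop (𝓝 m₁) := by
    simpa using ((tendsto_stdNormalPDF_atTop.comp (tendsto_sub_div_atTop m₂ hs₂)).const_mul
      s₂).const_add m₁
  refine ge_of_tendsto hlim ((eventually_ge_atTop m₂).mono fun u hu => ?_)
  have hx : 0 ≤ (u - m₂) / s₂ := div_nonneg (sub_nonneg.mpr hu) hs₂.le
  have hle := mul_le_mul_of_nonneg_left (stdNormalIntCDF_le_of_nonneg hx) hs₂.le
  rw [mul_add, mul_div_cancel₀ _ hs₂.ne', ← integral_cdf_gaussianReal hs₂] at hle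
  linarith [sub_le_integral_cdf_gaussianReal hs₁ m₁ u, h u]

/-- If `s₂ < s₁`, then far in the left tail the standardized points `xᵢ = (u - mᵢ) / sᵢ`
satisfy `x₂ ≤ x₁ - 2 ≤ -1`, and the tail bounds for `ψ` give `s₁ φ(x₁ - 2) ≤ s₂ φ(x₁ - 2)`. -/
lemma gaussianReal_std_le_of_forall_integral_cdf_le (hs₂ : 0 < s₂)
    (h : ∀ u, ∫ z in Iic u, cdf (gaussianReal m₁ ⟨s₁ ^ 2, sq_nonneg s₁⟩) z ≤
      ∫ z in Iic u, cdf (gaussianReal m₂ ⟨s₂ ^ 2, sq_nonneg s₂⟩) z) :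
    s₁ ≤ s₂ := by
  by_contra! hlt
  have hs₁ : 0 < s₁ := hs₂.trans hlt
  have hgap : Tendsto (fun u => (u - m₁) / s₁ - (u - m₂) / s₂) atBot atTop := by
    have hslope : s₁⁻¹ - s₂⁻¹ < 0 := sub_neg.mpr (inv_strictAnti₀ hs₂ hlt)
    refine (tendsto_atTop_add_const_right _ (m₂ / s₂ - m₁ / s₁)
      (tendsto_id.const_mul_atBot_of_neg hslope)).congr fun u => ?_
    simp only [id]
    ring
  obtain ⟨u, hu₁, hu₂⟩ := ((tendsto_sub_div_atBot m₁ hs₁).eventually (eventually_le_atBot 1)).and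
    (hgap.eventually (eventually_ge_atTop 2)) |>.exists
  set x₁ := (u - m₁) / s₁
  set x₂ := (u - m₂) / s₂
  have htail : s₁ * φ (x₁ - 2) ≤ s₂ * φ (x₁ - 2) := calc
    s₁ * φ (x₁ - 2) ≤ s₁ * ψ x₁ := by gcongr; exact stdNormalPDF_sub_two_le_stdNormalIntCDF hu₁
    _ ≤ s₂ * ψ x₂ := by
      simpa only [integral_cdf_gaussianReal hs₁, integral_cdf_gaussianReal hs₂] using h u
    _ ≤ s₂ * φ x₂ := by gcongr; exact stdNormalIntCDF_le_of_nonpos (by linarith)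
    _ ≤ s₂ * φ (x₁ - 2) := by
      gcongr
      exact monotoneOn_stdNormalPDF (mem_Iic.mpr (by linarith)) (mem_Iic.mpr (by linarith))
        (by linarith)
  linarith [le_of_mul_le_mul_right htail (stdNormalPDF_pos _)]

lemma forall_integral_cdf_gaussianReal_le_of_le (hs₁ : 0 ≤ s₁) (hs₂ : 0 < s₂) (hm : m₂ ≤ m₁)
    (hs : s₁ ≤ s₂) (u : ℝ) :
    ∫ z in Iic u, cdf (gaussianReal m₁ ⟨s₁ ^ 2, sq_nonneg s₁⟩) z ≤
      ∫ z in Iic u, cdf (gaussianReal m₂ ⟨s₂ ^ 2, sq_nonneg s₂⟩) z := by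
  rw [integral_cdf_gaussianReal hs₂]
  obtain rfl | hs₁ := hs₁.eq_or_lt
  · rw [integral_cdf_gaussianReal_zero]
    exact max_le ((sub_le_sub_left hm u).trans (le_mul_stdNormalIntCDF_div hs₂ _))
      (mul_nonneg hs₂.le (stdNormalIntCDF_nonneg _))
  · rw [integral_cdf_gaussianReal hs₁]
    calc s₁ * ψ ((u - m₁) / s₁) ≤ s₁ * ψ ((u - m₂) / s₁) := by
          gcongr
          exact monotone_stdNormalIntCDF (by gcongr)
      _ ≤ s₂ * ψ ((u - m₂) / s₂) :=
          monotoneOn_mul_stdNormalIntCDF_div _ hs₁ (hs₁.trans_le hs) hs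

theorem ssd_gaussianReal_iff (hs₁ : 0 ≤ s₁) (hs₂ : 0 < s₂) :
    SSD (gaussianReal m₁ ⟨s₁ ^ 2, sq_nonneg s₁⟩) (gaussianReal m₂ ⟨s₂ ^ 2, sq_nonneg s₂⟩) ↔
      m₂ ≤ m₁ ∧ s₁ ≤ s₂ := by
  rw [ssd_iff_forall_integral_cdf_le (integrableOn_cdf_gaussianReal hs₁ m₁)
    (integrableOn_cdf_gaussianReal hs₂.le m₂)]
  exact ⟨fun h => ⟨gaussianReal_mean_le_of_forall_integral_cdf_le hs₁ hs₂ h,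
      gaussianReal_std_le_of_forall_integral_cdf_le hs₂ h⟩,
    fun ⟨hm, hs⟩ => forall_integral_cdf_gaussianReal_le_of_le hs₁ hs₂ hm hs⟩

lemma ssd_map_affine_gaussianReal_iff {m t a c m' s : ℝ} (hct : 0 ≤ c * t) (hs : 0 < s) :
    SSD ((gaussianReal m ⟨t ^ 2, sq_nonneg t⟩).map (fun z => a + c * (z - m)))
        (gaussianReal m' ⟨s ^ 2, sq_nonneg s⟩) ↔ m' ≤ a ∧ c * t ≤ s := by
  rw [gaussianReal_map_affine, ssd_gaussianReal_iff hct hs]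

end SSDGaussian

section Games

variable {N : Type*} [Fintype N]

lemma mem_core_iff {v : Finset N → ℝ} (hv : v ∅ = 0) {x : N → ℝ} :
    x ∈ core v ↔ (∀ S : Finset N, S.Nonempty → v S ≤ ∑ i ∈ S, x i) ∧ ∑ i, x i = v Finset.univ := by
  refine and_congr_left' ⟨fun h S _ => h S, fun h S => ?_⟩
  obtain rfl | hS := S.eq_empty_or_nonempty
  · simp [hv]
  · exact h S hS

lemma mem_costCore_normalized_iff [DecidableEq N] [Nonempty N] {σ : Finset N → ℝ}
    (hσ : 0 < σ Finset.univ) {x : N → ℝ} :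
    x ∈ costCore (fun S => if S = ∅ then 0 else σ S / σ Finset.univ) ↔
      (∀ i, 0 ≤ x i) ∧ (∀ S : Finset N, S.Nonempty → (∑ i ∈ S, x i) * σ Finset.univ ≤ σ S) ∧
        ∑ i, x i = 1 := by
  simp only [costCore, mem_ofPred_eq, Finset.univ_nonempty.ne_empty, if_false, div_self hσ.ne']
  refine and_congr_right' (and_congr_left' ⟨fun h S hS => ?_, fun h S => ?_⟩)
  · simpa [hS.ne_empty, le_div_iff₀ hσ] using h S
  · obtain rfl | hS := S.eq_empty_or_nonempty
    · simp
    · simpa [hS.ne_empty, le_div_iff₀ hσ] using h S hS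

end Games

/-- Under normally distributed coalitional values, the SSD-core with transfer payments is
nonempty iff the core of the mean game and the nonnegative cost core of the deviation game
are both nonempty. -/
theorem ssd_core_normal_iff {N : Type*} [Fintype N] [DecidableEq N] [Nonempty N]
    (μ σ : Finset N → ℝ)
    (hμ0 : μ ∅ = 0)
    (hσ : ∀ S : Finset N, S.Nonempty → 0 < σ S) :
    (∃ d r : N → ℝ, (∀ i, 0 ≤ r i) ∧ (∑ i : N, d i = μ Finset.univ) ∧
        (∑ i : N, r i = 1) ∧
        ∀ S : Finset N, S.Nonempty →
          SSD ((gaussianReal (μ Finset.univ) ⟨σ Finset.univ ^ 2, sq_nonneg _⟩).map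
              (fun z => (∑ i ∈ S, d i) + (∑ i ∈ S, r i) * (z - μ Finset.univ)))
            (gaussianReal (μ S) ⟨σ S ^ 2, sq_nonneg _⟩)) ↔
      (core μ).Nonempty ∧
        (costCore (fun S => if S = ∅ then 0 else σ S / σ Finset.univ)).Nonempty := by
  have hσU := hσ _ Finset.univ_nonempty
  have hscale : ∀ r : N → ℝ, (∀ i, 0 ≤ r i) → ∀ S : Finset N,
      0 ≤ (∑ i ∈ S, r i) * σ Finset.univ :=
    fun r hr S => mul_nonneg (Finset.sum_nonneg fun i _ => hr i) hσU.le
  constructor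
  · rintro ⟨d, r, hr, hd, hr1, h⟩
    have h' S hS := (ssd_map_affine_gaussianReal_iff (hscale r hr S) (hσ S hS)).mp (h S hS)
    exact ⟨⟨d, (mem_core_iff hμ0).mpr ⟨fun S hS => (h' S hS).1, hd⟩⟩,
      ⟨r, (mem_costCore_normalized_iff hσU).mpr ⟨hr, fun S hS => (h' S hS).2, hr1⟩⟩⟩
  · rintro ⟨⟨d, hd⟩, ⟨r, hr⟩⟩
    rw [mem_core_iff hμ0] at hd
    rw [mem_costCore_normalized_iff hσU] at hr
    exact ⟨d, r, hr.1, hd.2, hr.2.2, fun S hS =>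
      (ssd_map_affine_gaussianReal_iff (hscale r hr.1 S) (hσ S hS)).mpr ⟨hd.1 S hS, hr.2.1 S hS⟩⟩
end

section
/- Let α ∈ (0,1) and let a_X < b_X and a_Y < b_Y be reals. Then the α-cut uniform measure U_α[a_X, b_X] second-order stochastically dominates U_α[a_Y, b_Y] if and only if a_X ≥ a_Y and (2−α)·b_X + α·a_X ≥ (2−α)·b_Y + α·a_Y. -/
/-!
Let `I_P(u) = ∫_{(-∞,u]} F_P` be the integrated cdf, so that `P ⪰_SSD Q` means `I_P ≤ I_Q`.
For `U_α[a,b]`, `I` vanishes up to `a`, equals `α/2 · (u-a)²/(b-a)` on `[a,b]`, and equals `u - m`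
beyond `b`, where `m = ((2-α)b + αa)/2` is the mean. If `a_X < a_Y` then `I_X > 0 = I_Y` at
`min(a_Y, b_X)`, and far to the right `I_X ≤ I_Y` reads `m_Y ≤ m_X`. Conversely, `I_X` has slope
at most `1` while `I_Y` has slope exactly `1` past `b_Y`, so it suffices to compare on
`(-∞, b_Y]`. There the quadratic pieces compare because the mean condition and `α ≤ 1` give
`b_Y - b_X ≤ a_X - a_Y`, and past `b_X` one uses
`I_Y(u) ≥ I_Y(b_Y) - (b_Y - u) = u - m_Y ≥ u - m_X`.
-/

open MeasureTheory ProbabilityTheory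
open scoped NNReal ENNReal

/-- The uniform probability measure on the interval `[a, b]`. -/
noncomputable def unif (a b : ℝ) : Measure ℝ :=
  (ENNReal.ofReal (b - a))⁻¹ • (volume.restrict (Set.Icc a b))

/-- The `α`-cut uniform measure `U_α[a, b] = α·Unif[a,b] + (1−α)·δ_b`. -/
noncomputable def alphaCutUnif (α a b : ℝ) : Measure ℝ :=
  ENNReal.ofReal α • unif a b + ENNReal.ofReal (1 - α) • Measure.dirac b


open Set

noncomputable def integratedCdf (P : Measure ℝ) (u : ℝ) : ℝ :=
  ∫ z in Iic u, cdf P z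

section integratedCdf

variable {P Q : Measure ℝ}

lemma ssd_iff_integratedCdf_le (hP : ∀ u, IntegrableOn (cdf P) (Iic u))
    (hQ : ∀ u, IntegrableOn (cdf Q) (Iic u)) :
    SSD P Q ↔ ∀ u, integratedCdf P u ≤ integratedCdf Q u := by
  simp only [SSD, integratedCdf, integral_sub (hP _) (hQ _), sub_nonpos]

lemma cdf_eq_zero_of_le {a x : ℝ} (ha : cdf P a = 0) (hx : x ≤ a) : cdf P x = 0 :=
  le_antisymm (ha ▸ monotone_cdf P hx) (cdf_nonneg P x)

lemma integrableOn_Iic_cdf {a : ℝ} (ha : cdf P a = 0) (u : ℝ) :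
    IntegrableOn (cdf P) (Iic u) := by
  have hleft : IntegrableOn (cdf P) (Iic a) :=
    integrableOn_zero.congr_fun (fun x hx => (cdf_eq_zero_of_le ha hx).symm) measurableSet_Iic
  have hright : IntegrableOn (cdf P) (Icc a u) :=
    (monotone_cdf P).locallyIntegrable.integrableOn_isCompact isCompact_Icc
  exact (hleft.union hright).mono_set fun x hx => (le_total x a).imp id fun hax => ⟨hax, hx⟩

lemma integratedCdf_nonneg (u : ℝ) : 0 ≤ integratedCdf P u :=
  integral_nonneg (cdf_nonneg P)

lemma integratedCdf_sub_integratedCdf (hP : ∀ u, IntegrableOn (cdf P) (Iic u)) (p u : ℝ) :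
    integratedCdf P u - integratedCdf P p = ∫ z in p..u, cdf P z :=
  intervalIntegral.integral_Iic_sub_Iic (hP p) (hP u)

lemma integratedCdf_le_add (hP : ∀ u, IntegrableOn (cdf P) (Iic u)) {p u : ℝ} (hpu : p ≤ u) :
    integratedCdf P u ≤ integratedCdf P p + (u - p) := by
  have : ∫ z in p..u, cdf P z ≤ ∫ _ in p..u, (1 : ℝ) :=
    intervalIntegral.integral_mono_on hpu (monotone_cdf P).intervalIntegrable
      intervalIntegrable_const fun z _ => cdf_le_one P z
  simp only [intervalIntegral.integral_const, smul_eq_mul, mul_one] at this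
  linarith [integratedCdf_sub_integratedCdf hP p u]

lemma integratedCdf_eq_add (hP : ∀ u, IntegrableOn (cdf P) (Iic u)) {b u : ℝ}
    (hb : cdf P b = 1) (hbu : b ≤ u) :
    integratedCdf P u = integratedCdf P b + (u - b) := by
  have : ∫ z in b..u, cdf P z = ∫ _ in b..u, (1 : ℝ) :=
    intervalIntegral.integral_congr fun z hz => le_antisymm (cdf_le_one P z)
      (hb ▸ monotone_cdf P (uIcc_of_le hbu ▸ hz).1)
  simp only [intervalIntegral.integral_const, smul_eq_mul, mul_one] at this
  linarith [integratedCdf_sub_integratedCdf hP b u]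

lemma integratedCdf_le_of_le_of_cdf_eq_one (hP : ∀ u, IntegrableOn (cdf P) (Iic u))
    (hQ : ∀ u, IntegrableOn (cdf Q) (Iic u)) {b u : ℝ} (hb : cdf Q b = 1)
    (hPQ : integratedCdf P b ≤ integratedCdf Q b) (hbu : b ≤ u) :
    integratedCdf P u ≤ integratedCdf Q u := by
  linarith [integratedCdf_le_add hP hbu, integratedCdf_eq_add hQ hb hbu]

end integratedCdf

section alphaCutUnif

variable {α a b : ℝ}

lemma unif_apply_Iic (hab : a < b) (x : ℝ) :
    unif a b (Iic x) = ENNReal.ofReal ((min x b - a) / (b - a)) := by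
  have : Iic x ∩ Icc a b = Icc a (min x b) := by
    ext z; simp only [mem_inter_iff, mem_Iic, mem_Icc, le_min_iff]; tauto
  rw [unif, Measure.smul_apply, Measure.restrict_apply measurableSet_Iic, this, Real.volume_Icc,
    ENNReal.ofReal_div_of_pos (sub_pos.2 hab), smul_eq_mul, div_eq_mul_inv, mul_comm]

lemma isProbabilityMeasure_unif (hab : a < b) : IsProbabilityMeasure (unif a b) := by
  constructor
  rw [unif, Measure.smul_apply, Measure.restrict_apply_univ, Real.volume_Icc, smul_eq_mul,
    ENNReal.inv_mul_cancel (by simpa using hab) ENNReal.ofReal_ne_top]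

lemma isProbabilityMeasure_alphaCutUnif (hα0 : 0 ≤ α) (hα1 : α ≤ 1) (hab : a < b) :
    IsProbabilityMeasure (alphaCutUnif α a b) := by
  have := isProbabilityMeasure_unif hab
  constructor
  rw [alphaCutUnif, Measure.add_apply, Measure.smul_apply, Measure.smul_apply, measure_univ,
    measure_univ, smul_eq_mul, smul_eq_mul, mul_one, mul_one,
    ← ENNReal.ofReal_add hα0 (sub_nonneg.2 hα1), add_sub_cancel, ENNReal.ofReal_one]

lemma cdf_alphaCutUnif (hα0 : 0 ≤ α) (hα1 : α ≤ 1) (hab : a < b) (x : ℝ) :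
    cdf (alphaCutUnif α a b) x =
      α * (unif a b).real (Iic x) + (1 - α) * (Measure.dirac b).real (Iic x) := by
  have := isProbabilityMeasure_alphaCutUnif hα0 hα1 hab
  have := isProbabilityMeasure_unif hab
  have hfin (c : ℝ) (μ : Measure ℝ) [IsFiniteMeasure μ] : (ENNReal.ofReal c • μ) (Iic x) ≠ ⊤ :=
    ENNReal.mul_ne_top ENNReal.ofReal_ne_top (measure_ne_top _ _)
  rw [cdf_eq_real, alphaCutUnif, measureReal_add_apply (hfin _ _) (hfin _ _),
    measureReal_ennreal_smul_apply, measureReal_ennreal_smul_apply, ENNReal.toReal_ofReal hα0,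
    ENNReal.toReal_ofReal (sub_nonneg.2 hα1)]

lemma cdf_alphaCutUnif_of_lt_right (hα0 : 0 ≤ α) (hα1 : α ≤ 1) (hab : a < b) {x : ℝ}
    (hxb : x < b) :
    cdf (alphaCutUnif α a b) x = α * max ((x - a) / (b - a)) 0 := by
  rw [cdf_alphaCutUnif hα0 hα1 hab, measureReal_def, unif_apply_Iic hab, ENNReal.toReal_ofReal',
    min_eq_left hxb.le, measureReal_def, Measure.dirac_apply' _ measurableSet_Iic,
    indicator_of_notMem (by simpa using hxb)]
  simp

lemma cdf_alphaCutUnif_of_right_le (hα0 : 0 ≤ α) (hα1 : α ≤ 1) (hab : a < b) {x : ℝ}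
    (hbx : b ≤ x) :
    cdf (alphaCutUnif α a b) x = 1 := by
  rw [cdf_alphaCutUnif hα0 hα1 hab, measureReal_def, unif_apply_Iic hab, ENNReal.toReal_ofReal',
    min_eq_right hbx, div_self (sub_pos.2 hab).ne', measureReal_def,
    Measure.dirac_apply' _ measurableSet_Iic, indicator_of_mem (by simpa using hbx)]
  simp

lemma cdf_alphaCutUnif_left (hα0 : 0 ≤ α) (hα1 : α ≤ 1) (hab : a < b) :
    cdf (alphaCutUnif α a b) a = 0 := by
  simp [cdf_alphaCutUnif_of_lt_right hα0 hα1 hab hab]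

lemma integrableOn_Iic_cdf_alphaCutUnif (hα0 : 0 ≤ α) (hα1 : α ≤ 1) (hab : a < b) (u : ℝ) :
    IntegrableOn (cdf (alphaCutUnif α a b)) (Iic u) :=
  integrableOn_Iic_cdf (cdf_alphaCutUnif_left hα0 hα1 hab) u

lemma integratedCdf_alphaCutUnif_of_le_left (hα0 : 0 ≤ α) (hα1 : α ≤ 1) (hab : a < b) {u : ℝ}
    (hua : u ≤ a) : integratedCdf (alphaCutUnif α a b) u = 0 :=
  setIntegral_eq_zero_of_forall_eq_zero fun _ hz =>
    cdf_eq_zero_of_le (cdf_alphaCutUnif_left hα0 hα1 hab) (le_trans hz hua)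

lemma integratedCdf_alphaCutUnif_of_mem_Icc (hα0 : 0 ≤ α) (hα1 : α ≤ 1) (hab : a < b) {u : ℝ}
    (hau : a ≤ u) (hub : u ≤ b) :
    integratedCdf (alphaCutUnif α a b) u = α / 2 * ((u - a) ^ 2 / (b - a)) := by
  have hramp : ∫ z in a..u, cdf (alphaCutUnif α a b) z = ∫ z in a..u, α / (b - a) * (z - a) := by
    refine intervalIntegral.integral_congr_ae ?_
    filter_upwards [volume.ae_ne b] with z hzb hz
    rw [uIoc_of_le hau] at hz
    rw [cdf_alphaCutUnif_of_lt_right hα0 hα1 hab (lt_of_le_of_ne (hz.2.trans hub) hzb),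
      max_eq_left (div_nonneg (sub_nonneg.2 hz.1.le) (sub_pos.2 hab).le)]
    ring
  have hsub := integratedCdf_sub_integratedCdf (integrableOn_Iic_cdf_alphaCutUnif hα0 hα1 hab) a u
  rw [integratedCdf_alphaCutUnif_of_le_left hα0 hα1 hab le_rfl, sub_zero, hramp,
    intervalIntegral.integral_const_mul] at hsub
  have : ∫ z in a..u, (z - a) = (u - a) ^ 2 / 2 := by simp; ring
  rw [hsub, this]
  field_simp

lemma integratedCdf_alphaCutUnif_of_right_le (hα0 : 0 ≤ α) (hα1 : α ≤ 1) (hab : a < b) {u : ℝ}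
    (hbu : b ≤ u) :
    integratedCdf (alphaCutUnif α a b) u = u - ((2 - α) * b + α * a) / 2 := by
  rw [integratedCdf_eq_add (integrableOn_Iic_cdf_alphaCutUnif hα0 hα1 hab)
    (cdf_alphaCutUnif_of_right_le hα0 hα1 hab le_rfl) hbu,
    integratedCdf_alphaCutUnif_of_mem_Icc hα0 hα1 hab hab.le le_rfl]
  field_simp [(sub_pos.2 hab).ne']
  ring

end alphaCutUnif

lemma sq_sub_div_le_sq_sub_div {aX bX aY bY u : ℝ} (hX : aX < bX) (hY : aY < bY) (ha : aY ≤ aX)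
    (hb : bY - bX ≤ aX - aY) (hXu : aX ≤ u) (hub : u ≤ bX) :
    (u - aX) ^ 2 / (bX - aX) ≤ (u - aY) ^ 2 / (bY - aY) := by
  rw [div_le_div_iff₀ (sub_pos.2 hX) (sub_pos.2 hY)]
  calc (u - aX) ^ 2 * (bY - aY)
      ≤ (u - aX) ^ 2 * ((bX - aX) + 2 * (aX - aY)) := by gcongr; linarith
    _ = (u - aX) ^ 2 * (bX - aX) + 2 * (aX - aY) * (u - aX) * (u - aX) := by ring
    _ ≤ (u - aX) ^ 2 * (bX - aX) + 2 * (aX - aY) * (u - aX) * (bX - aX) := by gcongr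
    _ = (u - aY) ^ 2 * (bX - aX) - (aX - aY) ^ 2 * (bX - aX) := by ring
    _ ≤ (u - aY) ^ 2 * (bX - aX) := sub_le_self _ (by nlinarith)

lemma integratedCdf_alphaCutUnif_le {α aX bX aY bY : ℝ} (hα0 : 0 ≤ α) (hα1 : α ≤ 1)
    (hX : aX < bX) (hY : aY < bY) (ha : aY ≤ aX)
    (hm : (2 - α) * bY + α * aY ≤ (2 - α) * bX + α * aX) (u : ℝ) :
    integratedCdf (alphaCutUnif α aX bX) u ≤ integratedCdf (alphaCutUnif α aY bY) u := by
  have hXint := integrableOn_Iic_cdf_alphaCutUnif hα0 hα1 hX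
  have hYint := integrableOn_Iic_cdf_alphaCutUnif hα0 hα1 hY
  have hb : bY - bX ≤ aX - aY := by nlinarith
  have hle : ∀ u ≤ bY,
      integratedCdf (alphaCutUnif α aX bX) u ≤ integratedCdf (alphaCutUnif α aY bY) u := by
    intro u huY
    rcases le_total u aX with huX | hXu
    · rw [integratedCdf_alphaCutUnif_of_le_left hα0 hα1 hX huX]
      exact integratedCdf_nonneg u
    rcases le_total u bX with hub | hbu
    · rw [integratedCdf_alphaCutUnif_of_mem_Icc hα0 hα1 hX hXu hub,
        integratedCdf_alphaCutUnif_of_mem_Icc hα0 hα1 hY (ha.trans hXu) huY]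
      exact mul_le_mul_of_nonneg_left (sq_sub_div_le_sq_sub_div hX hY ha hb hXu hub)
        (by positivity)
    · calc integratedCdf (alphaCutUnif α aX bX) u
          = u - ((2 - α) * bX + α * aX) / 2 :=
            integratedCdf_alphaCutUnif_of_right_le hα0 hα1 hX hbu
        _ ≤ integratedCdf (alphaCutUnif α aY bY) bY - (bY - u) := by
          rw [integratedCdf_alphaCutUnif_of_right_le hα0 hα1 hY le_rfl]; linarith
        _ ≤ integratedCdf (alphaCutUnif α aY bY) u := by
          linarith [integratedCdf_le_add hYint huY]
  rcases le_total u bY with huY | hYu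
  · exact hle u huY
  · exact integratedCdf_le_of_le_of_cdf_eq_one hXint hYint
      (cdf_alphaCutUnif_of_right_le hα0 hα1 hY le_rfl) (hle bY le_rfl) hYu

/-- SSD between two `α`-cut uniform distributions (with the same `α`) is characterized by
`a_X ≥ a_Y` and `(2−α)·b_X + α·a_X ≥ (2−α)·b_Y + α·a_Y`. -/
theorem ssd_alphaCutUnif_iff (α aX bX aY bY : ℝ) (hα : α ∈ Set.Ioo (0 : ℝ) 1)
    (hX : aX < bX) (hY : aY < bY) :
    SSD (alphaCutUnif α aX bX) (alphaCutUnif α aY bY) ↔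
      aY ≤ aX ∧ (2 - α) * bY + α * aY ≤ (2 - α) * bX + α * aX := by
  obtain ⟨hα0, hα1⟩ := hα
  rw [ssd_iff_integratedCdf_le (integrableOn_Iic_cdf_alphaCutUnif hα0.le hα1.le hX)
    (integrableOn_Iic_cdf_alphaCutUnif hα0.le hα1.le hY)]
  refine ⟨fun h => ⟨?_, ?_⟩, fun ⟨ha, hm⟩ =>
    integratedCdf_alphaCutUnif_le hα0.le hα1.le hX hY ha hm⟩
  · by_contra! hlt
    have hpos : 0 < α / 2 * ((min aY bX - aX) ^ 2 / (bX - aX)) := by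
      have := sub_pos.2 (lt_min hlt hX)
      have := sub_pos.2 hX
      positivity
    have := h (min aY bX)
    rw [integratedCdf_alphaCutUnif_of_mem_Icc hα0.le hα1.le hX (le_min hlt.le hX.le)
      (min_le_right _ _),
      integratedCdf_alphaCutUnif_of_le_left hα0.le hα1.le hY (min_le_left _ _)] at this
    linarith
  · have := h (max bX bY)
    rw [integratedCdf_alphaCutUnif_of_right_le hα0.le hα1.le hX (le_max_left _ _),
      integratedCdf_alphaCutUnif_of_right_le hα0.le hα1.le hY (le_max_right _ _)] at this
    linarith
end
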